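/- Let q = sk + r with 1 ≤ r < k-1. Let F be a family of k-subsets of {1,...,n} containing all k-subsets of {1,...,q} and having matching number at most s. For r+1 ≤ l ≤ l' ≤ k-1 with l + l' ≤ k + r, the subfamilies F_l = {F ∈ F : |F ∩ [q]| = l} and F_{l'} = {F ∈ F : |F ∩ [q]| = l'} are cross-intersecting. -/

import Mathlib

open Finset

/-- Coordinatewise (shifting) partial order on finite sets of naturals:
`A ≼ B` iff the increasing enumerations satisfy `aₗ ≤ bₗ` for all `l`. -/
def shiftLE (A B : Finset ℕ) : Prop :=
  List.Forall₂ (· ≤ ·) (A.sort (· ≤ ·)) (B.sort (· ≤ ·))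

/-- A family on the ground set `{1,…,n}` is shifted. -/
def IsShifted (n : ℕ) (F : Finset (Finset ℕ)) : Prop :=
  ∀ B ∈ F, ∀ A ⊆ Finset.Icc 1 n, shiftLE A B → A ∈ F

/-- The matching number of `F` is at most `s`. -/
def MatchingLE (F : Finset (Finset ℕ)) (s : ℕ) : Prop :=
  ∀ M ⊆ F, (M : Set (Finset ℕ)).PairwiseDisjoint id → M.card ≤ s

/-- `F` contains `s` pairwise disjoint members. -/
def HasMatching (F : Finset (Finset ℕ)) (s : ℕ) : Prop :=
  ∃ M ⊆ F, (M : Set (Finset ℕ)).PairwiseDisjoint id ∧ M.card = s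

/-- The clique number of `F` (as a `k`-graph on `{1,…,n}`) is at least `q`. -/
def HasClique (n : ℕ) (F : Finset (Finset ℕ)) (k q : ℕ) : Prop :=
  ∃ Q ⊆ Finset.Icc 1 n, Q.card = q ∧ Q.powersetCard k ⊆ F

/-! If `A ∈ F_l` and `B ∈ F_{l'}` were disjoint, then `[q] \ (A ∪ B)` would still have at least
`q - l - l' ≥ sk + r - (k + r) = (s - 1)k` elements. Since `F` contains every `k`-subset of `[q]`,
these hold `s - 1` pairwise disjoint members of `F`, which together with `A` and `B` form a matching
of size `s + 1`. -/

theorem Finset.exists_pairwiseDisjoint_subset_powersetCard {α : Type*} [DecidableEq α]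
    {k : ℕ} (hk : 0 < k) :
    ∀ (m : ℕ) (S : Finset α), m * k ≤ #S →
      ∃ M ⊆ S.powersetCard k, #M = m ∧ (M : Set (Finset α)).PairwiseDisjoint id
  | 0, _, _ => ⟨∅, empty_subset _, card_empty, by simp⟩
  | m + 1, S, hS => by
    obtain ⟨T, hTS, hTk⟩ := exists_subset_card_eq (le_of_add_le_right (add_one_mul m k ▸ hS))
    obtain ⟨M, hMsub, hMcard, hMdisj⟩ :=
      exists_pairwiseDisjoint_subset_powersetCard hk m (S \ T) (by
        rw [add_one_mul] at hS
        rw [card_sdiff_of_subset hTS, hTk]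
        omega)
    have hdisj : ∀ U ∈ M, Disjoint T U := fun U hU =>
      disjoint_of_subset_right (mem_powersetCard.1 (hMsub hU)).1 disjoint_sdiff
    have hTM : T ∉ M := fun hT => by
      have hT0 := (disjoint_self_iff_empty T).1 (hdisj T hT)
      subst hT0; rw [card_empty] at hTk; omega
    refine ⟨insert T M, ?_, by rw [card_insert_of_notMem hTM, hMcard], ?_⟩
    · refine insert_subset (mem_powersetCard.2 ⟨hTS, hTk⟩) (hMsub.trans ?_)
      exact powersetCard_mono sdiff_subset
    · rw [coe_insert]
      exact hMdisj.insert fun U hU _ => hdisj U hU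

theorem Finset.card_le_card_sdiff_union_add {α : Type*} [DecidableEq α] (Q A B : Finset α) :
    #Q ≤ #(Q \ (A ∪ B)) + #(A ∩ Q) + #(B ∩ Q) := by
  have hsplit := card_sdiff_add_card_inter Q (A ∪ B)
  have hunion : #(Q ∩ (A ∪ B)) ≤ #(A ∩ Q) + #(B ∩ Q) := by
    rw [inter_comm, union_inter_distrib_right]
    exact card_union_le _ _
  omega

theorem MatchingLE.card_sdiff_union_add_lt {F : Finset (Finset ℕ)} {s k : ℕ}
    (hmatch : MatchingLE F s) (hk : 0 < k) {Q : Finset ℕ} (hQ : Q.powersetCard k ⊆ F)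
    {A B : Finset ℕ} (hA : A ∈ F) (hB : B ∈ F) (hA0 : A.Nonempty) (hAB : Disjoint A B) :
    #(Q \ (A ∪ B)) + 2 * k < (s + 1) * k := by
  by_contra! hbig
  obtain ⟨M, hMsub, hMcard, hMdisj⟩ :=
    exists_pairwiseDisjoint_subset_powersetCard hk (s - 1) (Q \ (A ∪ B)) (by
      rcases s with _ | s
      · simp
      · rw [Nat.add_sub_cancel]; nlinarith)
  have hdisj : ∀ T ∈ M, Disjoint A T ∧ Disjoint B T := fun T hT => by
    have hT : Disjoint (A ∪ B) T :=
      disjoint_of_subset_right (mem_powersetCard.1 (hMsub hT)).1 disjoint_sdiff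
    exact ⟨hT.mono_left subset_union_left, hT.mono_left subset_union_right⟩
  have hnotMem : ∀ X, (∀ T ∈ M, Disjoint X T) → X ∉ M := fun X hX hXM => by
    have hX0 := (disjoint_self_iff_empty X).1 (hX X hXM)
    have hXk := (mem_powersetCard.1 (hMsub hXM)).2
    subst hX0; rw [card_empty] at hXk; omega
  have hAB' : A ∉ insert B M := by
    rw [mem_insert, not_or]
    exact ⟨fun h => hA0.ne_empty (disjoint_self.1 (h ▸ hAB)),
      hnotMem A fun T hT => (hdisj T hT).1⟩
  have hsub : insert A (insert B M) ⊆ F :=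
    insert_subset hA (insert_subset hB ((hMsub.trans (powersetCard_mono sdiff_subset)).trans hQ))
  have hpair : (↑(insert A (insert B M)) : Set (Finset ℕ)).PairwiseDisjoint id := by
    rw [coe_insert, coe_insert]
    refine (hMdisj.insert fun T hT _ => (hdisj T hT).2).insert fun T hT _ => ?_
    rcases hT with rfl | hT
    · exact hAB
    · exact (hdisj T hT).1
  have hcard := hmatch _ hsub hpair
  rw [card_insert_of_notMem hAB', card_insert_of_notMem (hnotMem B fun T hT => (hdisj T hT).2),
    hMcard] at hcard
  omega

theorem stmt_5_general (n k s r q l l' : ℕ) (hq : q = s * k + r)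
    (F : Finset (Finset ℕ)) (hF : F ⊆ (Finset.Icc 1 n).powersetCard k)
    (hclq : (Finset.Icc 1 q).powersetCard k ⊆ F)
    (hmatch : MatchingLE F s)
    (hl : r + 1 ≤ l) (hsum : l + l' ≤ k + r) :
    ∀ A ∈ F, (A ∩ Finset.Icc 1 q).card = l →
      ∀ B ∈ F, (B ∩ Finset.Icc 1 q).card = l' → (A ∩ B).Nonempty := by
  intro A hA hAl B hB hBl'
  by_contra hAB
  rw [not_nonempty_iff_eq_empty, ← disjoint_iff_inter_eq_empty] at hAB
  have hA0 : A.Nonempty := (card_pos.1 (by omega : 0 < #(A ∩ Icc 1 q))).mono inter_subset_left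
  have hk : 0 < k := (mem_powersetCard.1 (hF hA)).2 ▸ hA0.card_pos
  have hlt := hmatch.card_sdiff_union_add_lt hk hclq hA hB hA0 hAB
  have hle := card_le_card_sdiff_union_add (Icc 1 q) A B
  rw [Nat.card_Icc, hAl, hBl'] at hle
  rw [add_one_mul] at hlt
  omega

theorem stmt_5 (n k s r q l l' : ℕ) (hq : q = s * k + r)
    (hr1 : 1 ≤ r) (hr2 : r < k - 1)
    (F : Finset (Finset ℕ)) (hF : F ⊆ (Finset.Icc 1 n).powersetCard k)
    (hclq : (Finset.Icc 1 q).powersetCard k ⊆ F)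
    (hmatch : MatchingLE F s)
    (hl : r + 1 ≤ l) (hll' : l ≤ l') (hl' : l' ≤ k - 1) (hsum : l + l' ≤ k + r) :
    ∀ A ∈ F, (A ∩ Finset.Icc 1 q).card = l →
      ∀ B ∈ F, (B ∩ Finset.Icc 1 q).card = l' → (A ∩ B).Nonempty :=
  stmt_5_general n k s r q l l' hq F hF hclq hmatch hl hsum
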